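/- arXiv:2103.13456 — 2 statements merged into one kernel-verified Lean document; each statement's English description precedes it below -/
import Mathlib

section
/- Let X be a space that is sequentially n-connected at x₀ ∈ X. Then the unreduced cone CX = (X × [0,1]) / (X × {1}) is sequentially n-connected at every point of the arc {(x₀, t) : t ∈ [0,1]} ⊆ CX. -/
open Set unitInterval

/-- A countable family of maps clusters at (converges toward) a point. -/
def ClustersAt {K Z X : Type*} [TopologicalSpace Z] [TopologicalSpace X]
    (f : K → C(Z, X)) (x : X) : Prop :=
  ∀ U ∈ nhds x, {k : K | ¬ Set.range (f k) ⊆ U}.Finite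

/-- `X` is sequentially `n`-connected at `x`: for each `0 ≤ k ≤ n`, every sequence of based
`k`-loops (maps `I^k → X` sending the boundary of the cube, i.e. `S^k → X` based maps, to `x`)
that converges to `x` admits a sequence of based null-homotopies converging to `x`. -/
def SeqNConnectedAt (n : ℕ) (X : Type*) [TopologicalSpace X] (x : X) : Prop :=
  ∀ k ≤ n, ∀ f : ℕ → C((Fin k → I), X),
    (∀ m, ∀ y ∈ Cube.boundary (Fin k), f m y = x) →
    ClustersAt f x →
    ∃ H : ℕ → C((Fin k → I) × I, X),
      (∀ m y, H m (y, 0) = f m y) ∧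
      (∀ m y, H m (y, 1) = x) ∧
      (∀ m t, ∀ y ∈ Cube.boundary (Fin k), H m (y, t) = x) ∧
      ClustersAt H x

/-- The relation collapsing `X × {1}`. -/
def ConeRel (X : Type*) : X × I → X × I → Prop := fun p q => p.2 = 1 ∧ q.2 = 1

/-- The unreduced cone `CX = (X × I) / (X × {1})`, with the quotient topology. -/
def Cone (X : Type*) [TopologicalSpace X] : Type _ := Quot (ConeRel X)

instance (X : Type*) [TopologicalSpace X] : TopologicalSpace (Cone X) :=
  inferInstanceAs (TopologicalSpace (Quot (ConeRel X)))

/-!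
The cone contracts onto its apex along its segments, and by compactness of `I` the
contraction moves points close to the apex only within small neighbourhoods of it; contracting
each map of a converging sequence therefore gives converging null-homotopies. Below the apex,
`X × [0, 1)` is an open subspace of `CX`. A converging sequence of based maps eventually lands in
it, and there it is handled componentwise: by the hypothesis in `X`, and by the straight-line
contraction onto `t` in `[0, 1)`. The finitely many remaining maps are null-homotopic rel boundary
because `CX` is contractible: shrink the cube towards its centre while contracting, and fill the
collar in between with the track of the base point under the contraction.
-/

open Filter Topology Function

section SeqConnected

variable {Y Z : Type*} [TopologicalSpace Y] [TopologicalSpace Z]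

structure IsBasedNullhomotopy {N : Type*} (y₀ : Y) (f : C(N → I, Y))
    (H : C((N → I) × I, Y)) : Prop where
  apply_zero : ∀ y, H (y, 0) = f y
  apply_one : ∀ y, H (y, 1) = y₀
  apply_boundary : ∀ t, ∀ y ∈ Cube.boundary N, H (y, t) = y₀

theorem IsBasedNullhomotopy.map {N : Type*} {y₀ : Y} {f : C(N → I, Y)}
    {H : C((N → I) × I, Y)} (h : IsBasedNullhomotopy y₀ f H) (φ : C(Y, Z)) :
    IsBasedNullhomotopy (φ y₀) (φ.comp f) (φ.comp H) where
  apply_zero y := congrArg φ (h.apply_zero y)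
  apply_one y := congrArg φ (h.apply_one y)
  apply_boundary t y hy := congrArg φ (h.apply_boundary t y hy)

theorem IsBasedNullhomotopy.prodMk {N : Type*} {y₀ : Y} {z₀ : Z} {f : C(N → I, Y × Z)}
    {H₁ : C((N → I) × I, Y)} {H₂ : C((N → I) × I, Z)}
    (h₁ : IsBasedNullhomotopy y₀ (ContinuousMap.fst.comp f) H₁)
    (h₂ : IsBasedNullhomotopy z₀ (ContinuousMap.snd.comp f) H₂) :
    IsBasedNullhomotopy (y₀, z₀) f (H₁.prodMk H₂) where
  apply_zero y := Prod.ext (h₁.apply_zero y) (h₂.apply_zero y)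
  apply_one y := Prod.ext (h₁.apply_one y) (h₂.apply_one y)
  apply_boundary t y hy := Prod.ext (h₁.apply_boundary t y hy) (h₂.apply_boundary t y hy)

theorem clustersAt_iff_eventually {K A : Type*} [TopologicalSpace A] {f : K → C(A, Y)}
    {y₀ : Y} :
    ClustersAt f y₀ ↔ ∀ U ∈ 𝓝 y₀, ∀ᶠ k in cofinite, range (f k) ⊆ U :=
  Iff.rfl

theorem ClustersAt.comp {K A : Type*} [TopologicalSpace A] {f : K → C(A, Y)} {y₀ : Y}
    (h : ClustersAt f y₀) (φ : C(Y, Z)) : ClustersAt (fun k => φ.comp (f k)) (φ y₀) := by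
  rw [clustersAt_iff_eventually]
  intro U hU
  filter_upwards [h _ (φ.continuous.continuousAt hU)] with k hk
  rw [ContinuousMap.coe_comp, range_comp]
  exact image_subset_iff.2 hk

theorem ClustersAt.prodMk {K A : Type*} [TopologicalSpace A] {f : K → C(A, Y)}
    {g : K → C(A, Z)} {y₀ : Y} {z₀ : Z} (hf : ClustersAt f y₀) (hg : ClustersAt g z₀) :
    ClustersAt (fun k => (f k).prodMk (g k)) (y₀, z₀) := by
  rw [clustersAt_iff_eventually]
  intro W hW
  obtain ⟨U, hU, V, hV, hUV⟩ := mem_nhds_prod_iff.1 hW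
  filter_upwards [hf U hU, hg V hV] with k hfk hgk
  rintro _ ⟨a, rfl⟩
  exact hUV ⟨hfk ⟨a, rfl⟩, hgk ⟨a, rfl⟩⟩

theorem seqNConnectedAt_iff {n : ℕ} {y₀ : Y} :
    SeqNConnectedAt n Y y₀ ↔ ∀ k ≤ n, ∀ f : ℕ → C(Fin k → I, Y),
      (∀ m, ∀ y ∈ Cube.boundary (Fin k), f m y = y₀) → ClustersAt f y₀ →
      ∃ H : ℕ → C((Fin k → I) × I, Y),
        (∀ m, IsBasedNullhomotopy y₀ (f m) (H m)) ∧ ClustersAt H y₀ := by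
  refine forall₄_congr fun k _ f _ => imp_congr_right fun _ => exists_congr fun H => ?_
  exact ⟨fun ⟨h0, h1, hb, hc⟩ => ⟨fun m => ⟨h0 m, h1 m, hb m⟩, hc⟩,
    fun ⟨h, hc⟩ => ⟨fun m => (h m).1, fun m => (h m).2, fun m => (h m).3, hc⟩⟩

theorem seqNConnectedAt_of_eventually {n : ℕ} {y₀ : Y}
    (hnull : ∀ k, ∀ f : C(Fin k → I, Y), (∀ y ∈ Cube.boundary (Fin k), f y = y₀) →
      ∃ H, IsBasedNullhomotopy y₀ f H)
    (hseq : ∀ k ≤ n, ∀ f : ℕ → C(Fin k → I, Y),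
      (∀ m, ∀ y ∈ Cube.boundary (Fin k), f m y = y₀) → ClustersAt f y₀ →
      ∃ H : ℕ → C((Fin k → I) × I, Y),
        (∀ᶠ m in cofinite, IsBasedNullhomotopy y₀ (f m) (H m)) ∧ ClustersAt H y₀) :
    SeqNConnectedAt n Y y₀ := by
  classical
  rw [seqNConnectedAt_iff]
  intro k hk f hf hclus
  obtain ⟨H, hH, hHclus⟩ := hseq k hk f hf hclus
  choose H' hH' using fun m => hnull k (f m) (hf m)
  refine ⟨fun m => if IsBasedNullhomotopy y₀ (f m) (H m) then H m else H' m,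
    fun m => ?_, clustersAt_iff_eventually.2 fun U hU => ?_⟩
  · dsimp only
    split_ifs with h
    exacts [h, hH' m]
  · filter_upwards [hH, hHclus U hU] with m hm hmU
    rwa [if_pos hm]

theorem SeqNConnectedAt.prod {n : ℕ} {y₀ : Y} {z₀ : Z} (hY : SeqNConnectedAt n Y y₀)
    (hZ : SeqNConnectedAt n Z z₀) : SeqNConnectedAt n (Y × Z) (y₀, z₀) := by
  rw [seqNConnectedAt_iff] at hY hZ ⊢
  intro k hk f hf hclus
  obtain ⟨H₁, hH₁, hH₁clus⟩ := hY k hk (fun m => ContinuousMap.fst.comp (f m))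
    (fun m y hy => congrArg Prod.fst (hf m y hy)) (hclus.comp ContinuousMap.fst)
  obtain ⟨H₂, hH₂, hH₂clus⟩ := hZ k hk (fun m => ContinuousMap.snd.comp (f m))
    (fun m y hy => congrArg Prod.snd (hf m y hy)) (hclus.comp ContinuousMap.snd)
  exact ⟨fun m => (H₁ m).prodMk (H₂ m), fun m => (hH₁ m).prodMk (hH₂ m),
    hH₁clus.prodMk hH₂clus⟩

theorem Topology.IsEmbedding.exists_continuousMap_lift {A : Type*} [TopologicalSpace A]
    {e : Z → Y} (he : IsEmbedding e) {f : C(A, Y)} (hf : range f ⊆ range e) :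
    ∃ g : C(A, Z), e ∘ g = f := by
  obtain ⟨g, hg⟩ : ∃ g : A → Z, e ∘ g = f :=
    ⟨fun a => (hf ⟨a, rfl⟩).choose, funext fun a => (hf ⟨a, rfl⟩).choose_spec⟩
  exact ⟨⟨g, he.continuous_iff.2 (hg ▸ f.continuous)⟩, hg⟩

theorem SeqNConnectedAt.of_isOpenEmbedding {n : ℕ} {e : Z → Y} (he : IsOpenEmbedding e)
    {z₀ : Z} (hZ : SeqNConnectedAt n Z z₀)
    (hnull : ∀ k, ∀ f : C(Fin k → I, Y), (∀ y ∈ Cube.boundary (Fin k), f y = e z₀) →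
      ∃ H, IsBasedNullhomotopy (e z₀) f H) :
    SeqNConnectedAt n Y (e z₀) := by
  rw [seqNConnectedAt_iff] at hZ
  refine seqNConnectedAt_of_eventually hnull fun k hk f hf hclus => ?_
  have hfactor : ∀ᶠ m in cofinite, range (f m) ⊆ range e :=
    hclus _ (he.isOpen_range.mem_nhds ⟨z₀, rfl⟩)
  have hlift : ∀ m, ∃ g : C(Fin k → I, Z), (∀ y ∈ Cube.boundary (Fin k), g y = z₀) ∧
      (range (f m) ⊆ range e → e ∘ g = f m) := by
    intro m
    by_cases hm : range (f m) ⊆ range e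
    · obtain ⟨g, hg⟩ := he.isEmbedding.exists_continuousMap_lift hm
      refine ⟨g, fun y hy => he.injective ?_, fun _ => hg⟩
      rw [← hf m y hy, ← hg, comp_apply]
    · exact ⟨ContinuousMap.const _ z₀, fun _ _ => rfl, fun h => absurd h hm⟩
  choose g hg_base hg using hlift
  have hgclus : ClustersAt g z₀ := by
    rw [clustersAt_iff_eventually]
    intro U hU
    filter_upwards [hfactor, hclus _ (he.image_mem_nhds.2 hU)] with m hm hmU
    rintro _ ⟨y, rfl⟩
    rw [← he.injective.mem_set_image, ← comp_apply (f := e), hg m hm]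
    exact hmU ⟨y, rfl⟩
  obtain ⟨G, hG, hGclus⟩ := hZ k hk g hg_base hgclus
  let e' : C(Z, Y) := ⟨e, he.continuous⟩
  refine ⟨fun m => e'.comp (G m), ?_, hGclus.comp e'⟩
  filter_upwards [hfactor] with m hm
  have hfm : e'.comp (g m) = f m := ContinuousMap.ext (congrFun (hg m hm))
  exact hfm ▸ (hG m).map e'

theorem eventually_forall_apply_mem {K : Type*} [TopologicalSpace K] [CompactSpace K]
    {g : Y × K → Z} (hg : Continuous g) {y₀ : Y} {W : Set Z} (hW : ∀ a, W ∈ 𝓝 (g (y₀, a))) :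
    ∀ᶠ y in 𝓝 y₀, ∀ a, g (y, a) ∈ W := by
  simpa using isCompact_univ.eventually_forall_of_forall_eventually
    (P := fun y a => g (y, a) ∈ W) fun a _ => hg.continuousAt.preimage_mem_nhds (hW a)

theorem seqNConnectedAt_of_deformation {y₀ : Y} (c : C(Y × I, Y)) (h0 : ∀ y, c (y, 0) = y)
    (h1 : ∀ y, c (y, 1) = y₀) (hfix : ∀ t, c (y₀, t) = y₀) (n : ℕ) : SeqNConnectedAt n Y y₀ := by
  rw [seqNConnectedAt_iff]
  intro k _ f hf hclus
  refine ⟨fun m => c.comp ((f m).prodMap (ContinuousMap.id I)), fun m => ⟨?_, ?_, ?_⟩, ?_⟩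
  · exact fun y => h0 (f m y)
  · exact fun y => h1 (f m y)
  · intro t y hy
    simp [hf m y hy, hfix]
  · rw [clustersAt_iff_eventually]
    intro W hW
    have hV := eventually_forall_apply_mem c.continuous fun t => (hfix t).symm ▸ hW
    filter_upwards [hclus _ hV] with m hm
    rintro _ ⟨⟨y, t⟩, rfl⟩
    exact hm ⟨y, rfl⟩ t

end SeqConnected

section Cube

variable {N : Type*}

noncomputable def cubeCenter (N : Type*) : N → I := fun _ => ⟨1 / 2, by norm_num, by norm_num⟩

theorem dist_cubeCenter_apply (y : N → I) (i : N) :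
    dist (y i) (cubeCenter N i) = |(y i : ℝ) - 1 / 2| := by
  rw [Subtype.dist_eq, Real.dist_eq]
  rfl

theorem dist_cubeCenter_le [Fintype N] (y : N → I) : dist y (cubeCenter N) ≤ 1 / 2 :=
  (dist_pi_le_iff (by norm_num)).2 fun i => by
    rw [dist_cubeCenter_apply, abs_le]
    constructor <;> linarith [(y i).2.1, (y i).2.2]

theorem dist_cubeCenter_of_mem_boundary [Fintype N] {y : N → I} (hy : y ∈ Cube.boundary N) :
    dist y (cubeCenter N) = 1 / 2 := by
  obtain ⟨i, hi⟩ := hy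
  refine (dist_cubeCenter_le y).antisymm ?_
  calc (1 / 2 : ℝ) = dist (y i) (cubeCenter N i) := by
        rw [dist_cubeCenter_apply]
        rcases hi with h | h <;> norm_num [h]
    _ ≤ dist y (cubeCenter N) := dist_le_pi_dist _ _ i

noncomputable def cubeDilate (a : ℝ) (y : N → I) : N → I :=
  fun i => projIcc 0 1 zero_le_one (1 / 2 + a * ((y i : ℝ) - 1 / 2))

theorem cubeDilate_one (y : N → I) : cubeDilate 1 y = y := by
  funext i
  simp [cubeDilate]

@[fun_prop]
theorem Continuous.cubeDilate {X : Type*} [TopologicalSpace X] {a : X → ℝ} {y : X → N → I}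
    (ha : Continuous a) (hy : Continuous y) : Continuous fun x => cubeDilate (a x) (y x) :=
  continuous_pi fun _ => continuous_projIcc.comp (by fun_prop)

theorem cubeDilate_mem_boundary [Fintype N] {a : ℝ} {y : N → I}
    (hy : 0 < dist y (cubeCenter N)) (ha : a * dist y (cubeCenter N) = 1 / 2) :
    cubeDilate a y ∈ Cube.boundary N := by
  obtain ⟨⟨i, hi⟩, -⟩ := (dist_pi_eq_iff hy).1 rfl
  rw [dist_cubeCenter_apply] at hi
  refine ⟨i, ?_⟩
  rcases abs_choice ((y i : ℝ) - 1 / 2) with h | h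
  · right
    rw [cubeDilate, ← h, hi, ha]
    norm_num
  · left
    rw [cubeDilate, show (y i : ℝ) - 1 / 2 = -dist y (cubeCenter N) by linarith, mul_neg, ha]
    norm_num

end Cube

section Nullhomotopy

variable {Y Z : Type*} [TopologicalSpace Y] [TopologicalSpace Z]

theorem continuousAt_comp_of_apply_const {S K T : Type*} [TopologicalSpace S]
    [TopologicalSpace K] [CompactSpace K] [TopologicalSpace T] {g : S × K → Z} (hg : Continuous g)
    {s₀ : S} (hs₀ : ∀ a b, g (s₀, a) = g (s₀, b)) {τ : T → S} {t₀ : T} (hτ : ContinuousAt τ t₀)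
    (hτt₀ : τ t₀ = s₀) (u : T → K) : ContinuousAt (fun t => g (τ t, u t)) t₀ := by
  subst hτt₀
  rw [ContinuousAt, tendsto_def]
  intro W hW
  have hW' : ∀ a, W ∈ 𝓝 (g (τ t₀, a)) := fun a => by rwa [hs₀ a (u t₀)]
  filter_upwards [hτ.eventually (eventually_forall_apply_mem hg hW')] with t ht
  exact ht (u t)

variable {N : Type*} [Fintype N]

/-- `2 s` on the shrinking cube `2 d + 2 s ≤ 1`, where `d` is the sup-distance of `y` to the
centre, and `min (1 - 2 d) (2 - 2 s)` outside it. -/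
noncomputable def cubeNullhomotopyTime (z : (N → I) × I) : I :=
  projIcc 0 1 zero_le_one (min (min (2 * z.2) (1 - 2 * dist z.1 (cubeCenter N))) (2 - 2 * z.2))

theorem continuous_cubeNullhomotopyTime : Continuous (cubeNullhomotopyTime (N := N)) :=
  continuous_projIcc.comp (by fun_prop)

theorem cubeNullhomotopyTime_eq_zero {z : (N → I) × I}
    (h : z.2 = 0 ∨ z.2 = 1 ∨ dist z.1 (cubeCenter N) = 1 / 2) : cubeNullhomotopyTime z = 0 := by
  apply projIcc_of_le_left
  rcases h with h | h | h <;> simp only [h, Icc.coe_zero, Icc.coe_one] <;>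
    simp only [min_le_iff] <;> norm_num

theorem cubeNullhomotopyTime_eq_one {z : (N → I) × I} (hd : dist z.1 (cubeCenter N) = 0)
    (hs : (z.2 : ℝ) = 1 / 2) : cubeNullhomotopyTime z = 1 := by
  apply projIcc_of_right_le
  rw [hd, hs]
  norm_num

variable (c : C(Y × I, Y)) (f : C(N → I, Y)) (y₀ : Y)

noncomputable def cubeNullhomotopy : (N → I) × I → Y :=
  {z | 2 * dist z.1 (cubeCenter N) + 2 * z.2 ≤ 1}.piecewise
    (fun z => c (f (cubeDilate (1 - 2 * z.2)⁻¹ z.1), cubeNullhomotopyTime z))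
    (fun z => c (y₀, cubeNullhomotopyTime z))

variable {c f y₀}

theorem continuous_cubeNullhomotopy (h1 : ∀ y y', c (y, 1) = c (y', 1))
    (hf : ∀ y ∈ Cube.boundary N, f y = y₀) : Continuous (cubeNullhomotopy c f y₀) := by
  have hA : IsClosed {z : (N → I) × I | 2 * dist z.1 (cubeCenter N) + 2 * z.2 ≤ 1} :=
    isClosed_le (by fun_prop) continuous_const
  have hτ := continuous_cubeNullhomotopyTime (N := N)
  refine continuous_piecewise (fun z hz => ?_) ?_ (by fun_prop)
  · have hz' : 2 * dist z.1 (cubeCenter N) + 2 * z.2 = 1 :=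
      frontier_le_subset_eq (f := fun z : (N → I) × I => 2 * dist z.1 (cubeCenter N) + 2 * z.2)
        (by fun_prop) continuous_const hz
    rcases (dist_nonneg (x := z.1) (y := cubeCenter N)).eq_or_lt with hd | hd
    · rw [cubeNullhomotopyTime_eq_one hd.symm (by linarith)]
      exact h1 _ _
    · rw [hf _ (cubeDilate_mem_boundary hd ?_)]
      rw [show 1 - 2 * (z.2 : ℝ) = 2 * dist z.1 (cubeCenter N) by linarith]
      field_simp
  · rw [hA.closure_eq]
    rintro z (hz : 2 * dist z.1 (cubeCenter N) + 2 * z.2 ≤ 1)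
    by_cases hs : (z.2 : ℝ) = 1 / 2
    · have hd : dist z.1 (cubeCenter N) = 0 := le_antisymm (by linarith) dist_nonneg
      exact (continuousAt_comp_of_apply_const (g := fun p : I × (N → I) => c (f p.2, p.1))
        (by fun_prop) (fun _ _ => h1 _ _) hτ.continuousAt
        (cubeNullhomotopyTime_eq_one hd hs) _).continuousWithinAt
    · have hne : 1 - 2 * (z.2 : ℝ) ≠ 0 := fun h => hs (by linarith)
      exact ContinuousAt.continuousWithinAt (by fun_prop (disch := exact hne))

theorem exists_isBasedNullhomotopy_of_contraction (h0 : ∀ y, c (y, 0) = y)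
    (h1 : ∀ y y', c (y, 1) = c (y', 1)) (hf : ∀ y ∈ Cube.boundary N, f y = y₀) :
    ∃ H, IsBasedNullhomotopy y₀ f H := by
  refine ⟨⟨_, continuous_cubeNullhomotopy h1 hf⟩, ⟨fun y => ?_, fun y => ?_, fun t y hy => ?_⟩⟩
  all_goals simp only [ContinuousMap.coe_mk, cubeNullhomotopy, piecewise, mem_ofPred_eq]
  · have hmem : 2 * dist y (cubeCenter N) + 2 * ((0 : I) : ℝ) ≤ 1 := by
      rw [Icc.coe_zero]
      linarith [dist_cubeCenter_le y]
    rw [if_pos hmem, cubeNullhomotopyTime_eq_zero (Or.inl rfl), h0]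
    simp [cubeDilate_one]
  · have hmem : ¬ 2 * dist y (cubeCenter N) + 2 * ((1 : I) : ℝ) ≤ 1 := by
      rw [Icc.coe_one]
      linarith [dist_nonneg (x := y) (y := cubeCenter N)]
    rw [if_neg hmem, cubeNullhomotopyTime_eq_zero (Or.inr (Or.inl rfl)), h0]
  · have hd := dist_cubeCenter_of_mem_boundary hy
    have ht : cubeNullhomotopyTime (y, t) = 0 :=
      cubeNullhomotopyTime_eq_zero (Or.inr (Or.inr hd))
    split_ifs with hmem
    · obtain rfl : t = 0 := Subtype.ext (le_antisymm (by rw [Icc.coe_zero]; linarith) t.2.1)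
      rw [ht, h0]
      simp [cubeDilate_one, hf y hy]
    · rw [ht, h0]

end Nullhomotopy

namespace Cone

variable {X : Type*}

theorem eq_of_mk_eq_mk {p q : X × I} (h : Quot.mk (ConeRel X) p = Quot.mk (ConeRel X) q)
    (hq : q.2 ≠ 1) : p = q := by
  let g : X × I → Option (X × I) := fun p => if p.2 = 1 then none else some p
  have hg : g p = g q := congrArg (Quot.lift g fun a b hab => by simp [g, hab.1, hab.2]) h
  simp only [g, hq, if_false] at hg
  split_ifs at hg
  exact Option.some_injective _ hg

theorem mk_one_eq_mk_one (x x' : X) :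
    Quot.mk (ConeRel X) (x, 1) = Quot.mk (ConeRel X) (x', 1) :=
  Quot.sound ⟨rfl, rfl⟩

theorem isOpen_image_mk [TopologicalSpace X] {V : Set (X × I)} (hV : IsOpen V)
    (h : ∀ p ∈ V, p.2 ≠ 1) : IsOpen (Quot.mk (ConeRel X) '' V) := by
  rw [← isQuotientMap_quot_mk.isOpen_preimage]
  convert hV
  ext p
  refine ⟨?_, fun hp => ⟨p, hp, rfl⟩⟩
  rintro ⟨q, hq, hqp⟩
  rwa [eq_of_mk_eq_mk hqp.symm (h q hq)]

theorem isOpenEmbedding_mk_Iio_one [TopologicalSpace X] :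
    IsOpenEmbedding fun p : X × Iio (1 : I) => (Quot.mk (ConeRel X) (p.1, p.2) : Cone X) := by
  refine .of_continuous_injective_isOpenMap (continuous_quot_mk.comp (by fun_prop)) ?_ ?_
  · rintro ⟨x, t⟩ ⟨x', t'⟩ h
    obtain ⟨rfl, ht⟩ : x = x' ∧ (t : I) = t' := Prod.mk.inj (eq_of_mk_eq_mk h (ne_of_lt t'.2))
    rw [Subtype.ext ht]
  · intro O hO
    have hφ : IsOpenMap (Prod.map id Subtype.val : X × Iio (1 : I) → X × I) :=
      IsOpenMap.id.prodMap isOpen_Iio.isOpenMap_subtype_val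
    rw [show (fun p : X × Iio (1 : I) => (Quot.mk (ConeRel X) (p.1, p.2) : Cone X)) =
      Quot.mk (ConeRel X) ∘ Prod.map id Subtype.val from rfl, image_comp]
    exact isOpen_image_mk (hφ O hO) (by rintro _ ⟨p, -, rfl⟩; exact ne_of_lt p.2.2)

variable [TopologicalSpace X]

noncomputable def contract : C(Cone X × I, Cone X) where
  toFun p := Quot.map (fun q : X × I => (q.1, Icc.convexComb q.2 1 p.2))
    (fun _ _ hab => ⟨by simp [hab.1], by simp [hab.2]⟩) p.1
  continuous_toFun :=
    isQuotientMap_quot_mk.continuous_lift_prod_left (continuous_quot_mk.comp (by fun_prop))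

theorem contract_mk (p : X × I) (t : I) :
    contract (Quot.mk (ConeRel X) p, t) = Quot.mk (ConeRel X) (p.1, Icc.convexComb p.2 1 t) :=
  rfl

theorem contract_zero (z : Cone X) : contract (z, 0) = z := by
  induction z using Quot.ind
  rw [contract_mk, Icc.convexComb_zero]

theorem contract_one (x : X) (z : Cone X) : contract (z, 1) = Quot.mk (ConeRel X) (x, 1) := by
  induction z using Quot.ind
  rw [contract_mk, Icc.convexComb_one]
  exact mk_one_eq_mk_one _ _

theorem contract_apex (x : X) (t : I) :
    contract (Quot.mk (ConeRel X) (x, 1), t) = Quot.mk (ConeRel X) (x, 1) := by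
  rw [contract_mk, Icc.convexComb_eq]

end Cone

theorem seqNConnectedAt_Iio_one {t₀ : I} (ht₀ : t₀ < 1) (n : ℕ) :
    SeqNConnectedAt n (Iio (1 : I)) ⟨t₀, ht₀⟩ := by
  have hmem (u : Iio (1 : I)) (t : I) : Icc.convexComb (u : I) t₀ t < 1 := by
    have hu : (u : ℝ) < 1 := u.2
    have ht : (t₀ : ℝ) < 1 := ht₀
    rw [← Subtype.coe_lt_coe, Icc.coe_convexComb, Icc.coe_one]
    nlinarith [mul_le_mul_of_nonneg_left (le_max_left (u : ℝ) t₀) (sub_nonneg.2 t.2.2),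
      mul_le_mul_of_nonneg_left (le_max_right (u : ℝ) t₀) t.2.1, max_lt hu ht]
  refine seqNConnectedAt_of_deformation ⟨fun p => ⟨_, hmem p.1 p.2⟩, by fun_prop⟩ ?_ ?_ ?_ n
  all_goals intro _; simp

/-- If `X` is sequentially `n`-connected at `x₀`, then the unreduced cone `CX` is sequentially
`n`-connected at every point `(x₀, t)` of the arc `{x₀} × I ⊆ CX`. -/
theorem seqNConnectedAt_cone {X : Type*} [TopologicalSpace X] (n : ℕ) (x₀ : X)
    (hX : SeqNConnectedAt n X x₀) :
    ∀ t : I, SeqNConnectedAt n (Cone X) (Quot.mk (ConeRel X) (x₀, t)) := by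
  intro t
  rcases (le_one' : t ≤ 1).eq_or_lt with rfl | ht
  · exact seqNConnectedAt_of_deformation Cone.contract Cone.contract_zero
      (Cone.contract_one x₀) (Cone.contract_apex x₀) n
  · have hconst (z z' : Cone X) : Cone.contract (z, 1) = Cone.contract (z', 1) :=
      (Cone.contract_one x₀ z).trans (Cone.contract_one x₀ z').symm
    exact (hX.prod (seqNConnectedAt_Iio_one ht n)).of_isOpenEmbedding
      Cone.isOpenEmbedding_mk_Iio_one fun _ _ =>
        exists_isBasedNullhomotopy_of_contraction Cone.contract_zero hconst
end

section
/- Suppose p : Ỹ → Y is a generalized covering map, X ⊆ Y is a path-connected subspace containing the basepoint, and the inclusion X → Y induces a surjection on fundamental groups. Then the preimage p⁻¹(X) is path-connected. -/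
open Set Topology

universe u

/-- `p : E → X` is a **generalized covering map**: `E` is nonempty, path connected and locally
path connected, and for every map `f : (Y, y) → (X, x)` from a path-connected, locally
path-connected space and every `e ∈ p⁻¹(x)` such that `f_#(π₁(Y,y)) ≤ p_#(π₁(E,e))` (every
loop `f ∘ γ` is path-homotopic to some `p ∘ δ`), there is a unique based lift of `f`. -/
def IsGenCoveringMap {E X : Type u} [TopologicalSpace E] [TopologicalSpace X]
    (p : C(E, X)) : Prop :=
  Nonempty E ∧ PathConnectedSpace E ∧ LocallyPathConnectedSpace E ∧
  ∀ (Y : Type u) [TopologicalSpace Y] [PathConnectedSpace Y] [LocallyPathConnectedSpace Y]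
    (y : Y) (f : C(Y, X)) (e : E) (hfy : f y = p e),
    (∀ γ : Path y y, ∃ δ : Path e e,
      (δ.map p.continuous).Homotopic ((γ.map f.continuous).cast hfy.symm hfy.symm)) →
    ∃! g : C(Y, E), p.comp g = f ∧ g y = e

/-!
Given `e` over `X`, join `e₀` to `e` by a path `Γ` in `E`. By `π₁`-surjectivity, `p ∘ Γ` is
homotopic rel endpoints to a path inside `X`. The homotopy lifts to `E` because the square is
simply connected, and uniqueness of lifts along the other three sides of the square shows that
its fourth side is a lift of the path in `X` running from `e₀` to `e`, hence a path in `p⁻¹(X)`.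
-/

universe v

instance unitInterval.contractibleSpace : ContractibleSpace unitInterval :=
  (convex_Icc (0 : ℝ) 1).contractibleSpace ⟨0, unitInterval.zero_mem⟩

instance unitInterval.locallyPathConnectedSpace : LocallyPathConnectedSpace unitInterval :=
  (convex_Icc (0 : ℝ) 1).locallyPathConnectedSpace

theorem Path.Homotopic.trans_homotopic_of_homotopic_trans_symm {X : Type*} [TopologicalSpace X]
    {x₀ x₁ x₂ : X} {δ : Path x₀ x₂} {β : Path x₀ x₁} {α : Path x₂ x₁}
    (h : δ.Homotopic (β.trans α.symm)) : (δ.trans α).Homotopic β :=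
  (((h.hcomp (.refl α)).trans (trans_assoc β α.symm α)).trans
    ((Path.Homotopic.refl β).hcomp (symm_trans α))).trans (trans_refl β)

namespace IsGenCoveringMap

section Lifting

/- `E` and `Y` live in `Type (max u v)` so that the domain `Z : Type v` can be moved into their
universe with `ULift`, as the definition of `IsGenCoveringMap` requires. -/
variable {E Y : Type (max u v)} [TopologicalSpace E] [TopologicalSpace Y] {p : C(E, Y)}
  {Z : Type v} [TopologicalSpace Z]

theorem eq_of_comp_eq (hp : IsGenCoveringMap p) [PathConnectedSpace Z]
    [LocallyPathConnectedSpace Z] {g₁ g₂ : C(Z, E)} (h : p.comp g₁ = p.comp g₂) (z : Z)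
    (hz : g₁ z = g₂ z) : g₁ = g₂ := by
  let φ : ULift.{u} Z ≃ₜ Z := Homeomorph.ulift
  have : PathConnectedSpace (ULift.{u} Z) := φ.symm.surjective.pathConnectedSpace φ.symm.continuous
  have : LocallyPathConnectedSpace (ULift.{u} Z) := φ.isOpenEmbedding.locallyPathConnectedSpace
  let down : C(ULift.{u} Z, Z) := φ
  -- `p ∘ g₁` meets the lifting criterion: each loop `p ∘ g₁ ∘ γ` is the image of `g₁ ∘ γ`.
  have hφ : g₁.comp down = g₂.comp down :=
    (hp.2.2.2 _ (ULift.up z) (p.comp (g₁.comp down)) (g₁ z) rfl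
      fun γ ↦ ⟨γ.map (g₁.comp down).continuous, .refl _⟩).unique ⟨rfl, rfl⟩
      ⟨congrArg (·.comp down) h.symm, hz.symm⟩
  ext x
  exact congr($hφ (ULift.up x))

theorem apply_eq_of_comp_eq_const (hp : IsGenCoveringMap p) [PathConnectedSpace Z]
    [LocallyPathConnectedSpace Z] {g : C(Z, E)} {y : Y} (h : ∀ z, p (g z) = y) (z₀ z : Z) :
    g z = g z₀ :=
  DFunLike.congr_fun (hp.eq_of_comp_eq (g₂ := .const Z (g z₀))
    (ContinuousMap.ext fun z ↦ (h z).trans (h z₀).symm) z₀ rfl) z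

theorem exists_lift (hp : IsGenCoveringMap p) [SimplyConnectedSpace Z]
    [LocallyPathConnectedSpace Z] (f : C(Z, Y)) (z : Z) (e : E) (he : f z = p e) :
    ∃ g : C(Z, E), p.comp g = f ∧ g z = e := by
  let φ : ULift.{u} Z ≃ₜ Z := Homeomorph.ulift
  have : SimplyConnectedSpace (ULift.{u} Z) := φ.toHomotopyEquiv.simplyConnectedSpace
  have : LocallyPathConnectedSpace (ULift.{u} Z) := φ.isOpenEmbedding.locallyPathConnectedSpace
  obtain ⟨g, hg, hgz⟩ := (hp.2.2.2 _ (ULift.up z) (f.comp φ) e he fun γ ↦ ⟨.refl e, by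
    convert ((SimplyConnectedSpace.paths_homotopic (.refl _) γ).map (f.comp φ)).pathCast
      (x₂ := p e) (x₃ := p e) he.symm he.symm using 1
    ext
    exact he.symm⟩).exists
  refine ⟨g.comp φ.symm, ?_, hgz⟩
  ext x
  exact congr($hg (φ.symm x))

end Lifting

variable {E Y : Type u} [TopologicalSpace E] [TopologicalSpace Y] {p : C(E, Y)}

theorem exists_path_map_eq_of_homotopic (hp : IsGenCoveringMap p) {e₀ e₁ : E} (Γ : Path e₀ e₁)
    {γ : Path (p e₀) (p e₁)} (h : γ.Homotopic (Γ.map p.continuous)) :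
    ∃ Γ' : Path e₀ e₁, Γ'.map p.continuous = γ := by
  obtain ⟨F⟩ := h
  -- `F (0, ·) = γ`, `F (1, ·) = p ∘ Γ`, while `F (·, 0)` and `F (·, 1)` are constant.
  obtain ⟨G, hG, hG₀⟩ := hp.exists_lift F.toContinuousMap (0, 0) e₀ (F.source 0)
  have hGF (x : unitInterval × unitInterval) : p (G x) = F x := congr($hG x)
  have bottom (s : unitInterval) : G (s, 0) = e₀ :=
    (hp.apply_eq_of_comp_eq_const (g := ⟨fun s ↦ G (s, 0), by fun_prop⟩)
      (fun s ↦ (hGF _).trans (F.source s)) 0 s).trans hG₀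
  have right : G.curry 1 = Γ.toContinuousMap :=
    hp.eq_of_comp_eq (by ext t; simp [hGF]) 0 (by simp [bottom])
  have top : G (0, 1) = G (1, 1) :=
    hp.apply_eq_of_comp_eq_const (g := ⟨fun s ↦ G (s, 1), by fun_prop⟩)
      (fun s ↦ (hGF _).trans (F.target s)) 1 0
  refine ⟨⟨G.curry 0, hG₀, ?_⟩, ?_⟩
  · simpa [top] using congr($right 1)
  · ext t
    exact (hGF (0, t)).trans (F.apply_zero t)

end IsGenCoveringMap

/-- If `p : Ỹ → Y` is a generalized covering map, `X ⊆ Y` a path-connected subspace containing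
the basepoint, and the inclusion `X → Y` is `π₁`-surjective (every loop at `y₀` in `Y` is
path-homotopic to a loop contained in `X`), then `p⁻¹(X)` is path connected. -/
theorem genCovering_preimage_pathConnected {E Y : Type u} [TopologicalSpace E]
    [TopologicalSpace Y] (p : C(E, Y)) (hp : IsGenCoveringMap p)
    (X : Set Y) (y₀ : Y) (hy₀ : y₀ ∈ X) (hXpc : IsPathConnected X)
    (e₀ : E) (he : p e₀ = y₀)
    (hsurj : ∀ γ : Path y₀ y₀, ∃ δ : Path y₀ y₀, Set.range ⇑δ ⊆ X ∧ δ.Homotopic γ) :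
    IsPathConnected (⇑p ⁻¹' X) := by
  subst he
  have : PathConnectedSpace E := hp.2.1
  refine ⟨e₀, hy₀, fun {e} he ↦ ?_⟩
  obtain ⟨Γ⟩ := PathConnectedSpace.joined e₀ e
  obtain ⟨α, hαX⟩ := hXpc.joinedIn _ hy₀ _ he
  obtain ⟨δ, hδX, hδ⟩ := hsurj ((Γ.map p.continuous).trans α.symm)
  obtain ⟨Γ', hΓ'⟩ := hp.exists_path_map_eq_of_homotopic Γ
    (Path.Homotopic.trans_homotopic_of_homotopic_trans_symm hδ)
  refine ⟨Γ', fun t ↦ ?_⟩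
  have hX : Set.range (δ.trans α) ⊆ X := by
    rw [Path.trans_range]
    exact union_subset hδX (range_subset_iff.2 hαX)
  show p (Γ' t) ∈ X
  rw [← hΓ'] at hX
  exact hX (mem_range_self t)
end
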